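/- For multiplicative characters A, B, B', C of F_q and x, y ∈ F_q \ {0,1}, F₁(A;B,B';C;x,y) = (BB')(-1)·F₁(A;B,B'; ABB'C̄; 1−x, 1−y). -/

import Mathlib

open Finset

variable {F : Type*} [Field F] [Fintype F] [DecidableEq F]

/-- Finite-field binomial coefficient `[A choose B] = B(-1) * J(A, B⁻¹)`. -/
noncomputable def ffBinom (A B : MulChar F ℂ) : ℂ :=
  B (-1) * jacobiSum A B⁻¹

/-- Finite-field Gauss hypergeometric function
`₂F₁[A,B;C;x] = ε(x)·(BC)(-1)·∑_u B(u)(B̅C)(1-u)A̅(1-ux)`. -/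
noncomputable def ffHyp (A B C : MulChar F ℂ) (x : F) : ℂ :=
  (1 : MulChar F ℂ) x * (B * C) (-1) *
    ∑ u : F, B u * (B⁻¹ * C) (1 - u) * A⁻¹ (1 - u * x)

/-- Finite-field Appell function
`F₁(A;B,B';C;x,y) = ε(xy)·(AC)(-1)·∑_u A(u)(A̅C)(1-u)B̅(1-ux)B̅'(1-uy)`. -/
noncomputable def ffAppellF1 (A B B' C : MulChar F ℂ) (x y : F) : ℂ :=
  (1 : MulChar F ℂ) (x * y) * (A * C) (-1) *
    ∑ u : F, A u * (A⁻¹ * C) (1 - u) * B⁻¹ (1 - u * x) * B'⁻¹ (1 - u * y)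

/-- δ(0)=1, δ(t)=0 otherwise. -/
noncomputable def ffDelta (x : F) : ℂ := if x = 0 then 1 else 0

/-!
The substitution `u ↦ u / (u - 1)` is an involution of `F ∖ {1}`; it sends `u` to
`-u / (1 - u)`, `1 - u` to `1 / (1 - u)` and `1 - u x` to `(1 - u (1 - x)) / (1 - u)`.
Hence it turns the summand of `F₁(A;B,B';C;x,y)` into `A(-1)` times the summand of
`F₁(A;B,B';ABB'C̄;1-x,1-y)`, the powers of `χ(1 - u)` recombining into `(BB'C̄)(1 - u)`.
The point `u = 1` contributes nothing to either sum, and for `x, y ∉ {0, 1}` both factors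
`ε` are `1`.
-/

lemma MulChar.apply_neg_one_mul_self {R R' : Type*} [CommRing R] [CommMonoidWithZero R']
    (χ : MulChar R R') : χ (-1) * χ (-1) = 1 := by
  rw [← map_mul, neg_one_mul, neg_neg, χ.map_one]

lemma MulChar.apply_inv {K K' : Type*} [Field K] [CommGroupWithZero K'] (χ : MulChar K K')
    (a : K) : χ a⁻¹ = (χ a)⁻¹ := by
  rw [← MulChar.inv_apply', MulChar.inv_apply_eq_inv']

lemma div_sub_one_ne_one {K : Type*} [DivisionRing K] (u : K) : u / (u - 1) ≠ 1 := by
  rcases eq_or_ne (u - 1) 0 with hu | hu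
  · simp [hu]
  · rw [Ne, div_eq_one_iff_eq hu]
    intro h
    simpa using congrArg (u - ·) h

lemma div_sub_one_div_sub_one {K : Type*} [Field K] {u : K} (hu : u ≠ 1) :
    u / (u - 1) / (u / (u - 1) - 1) = u := by
  have hu' : u - 1 ≠ 0 := sub_ne_zero.mpr hu
  field_simp
  ring

lemma Finset.sum_erase_one_comp_div_sub_one {K M : Type*} [Field K] [Fintype K] [DecidableEq K]
    [AddCommMonoid M] (f : K → M) :
    ∑ u ∈ univ.erase 1, f (u / (u - 1)) = ∑ u ∈ univ.erase 1, f u := by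
  have hmem : ∀ u ∈ univ.erase (1 : K), u / (u - 1) ∈ univ.erase 1 := fun u _ ↦
    mem_erase.mpr ⟨div_sub_one_ne_one u, mem_univ _⟩
  have hinv : ∀ u ∈ univ.erase (1 : K), u / (u - 1) / (u / (u - 1) - 1) = u := fun u hu ↦
    div_sub_one_div_sub_one (ne_of_mem_erase hu)
  exact sum_nbij' _ _ hmem hmem hinv hinv fun _ _ ↦ rfl

noncomputable def ffAppellF1Summand {K : Type*} [Field K] (A B B' C : MulChar K ℂ) (x y u : K) :
    ℂ :=
  A u * (A⁻¹ * C) (1 - u) * B⁻¹ (1 - u * x) * B'⁻¹ (1 - u * y)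

lemma ffAppellF1Summand_one {K : Type*} [Field K] (A B B' C : MulChar K ℂ) (x y : K) :
    ffAppellF1Summand A B B' C x y 1 = 0 := by
  simp [ffAppellF1Summand, MulChar.map_zero]

lemma ffAppellF1Summand_div_sub_one {K : Type*} [Field K] (A B B' C : MulChar K ℂ) (x y : K)
    {u : K} (hu : u ≠ 1) :
    ffAppellF1Summand A B B' C x y (u / (u - 1)) =
      A (-1) * ffAppellF1Summand A B B' (A * B * B' * C⁻¹) (1 - x) (1 - y) u := by
  have hu' : u - 1 ≠ 0 := sub_ne_zero.mpr hu
  have e0 : u / (u - 1) = -1 * u * (1 - u)⁻¹ := by field_simp; ring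
  have e1 : 1 - u / (u - 1) = (1 - u)⁻¹ := by field_simp; ring
  have e2 : ∀ z : K, 1 - u / (u - 1) * z = (1 - u * (1 - z)) * (1 - u)⁻¹ := fun z ↦ by
    field_simp; ring
  rw [ffAppellF1Summand, e1, e2, e2, e0, ffAppellF1Summand]
  simp only [MulChar.mul_apply, MulChar.inv_apply_eq_inv', map_mul, MulChar.apply_inv, mul_inv,
    inv_inv]
  ring

lemma sum_ffAppellF1Summand_eq {K : Type*} [Field K] [Fintype K] [DecidableEq K]
    (A B B' C : MulChar K ℂ) (x y : K) :
    ∑ u, ffAppellF1Summand A B B' C x y u =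
      A (-1) * ∑ u, ffAppellF1Summand A B B' (A * B * B' * C⁻¹) (1 - x) (1 - y) u := by
  rw [← add_sum_erase _ _ (mem_univ 1), ← add_sum_erase _ _ (mem_univ 1),
    ffAppellF1Summand_one, ffAppellF1Summand_one, zero_add, zero_add,
    ← sum_erase_one_comp_div_sub_one, mul_sum]
  exact sum_congr rfl fun u hu ↦ ffAppellF1Summand_div_sub_one A B B' C x y (ne_of_mem_erase hu)

lemma ffAppellF1_eq_mul_sum {K : Type*} [Field K] [Fintype K] (A B B' C : MulChar K ℂ)
    (x y : K) :
    ffAppellF1 A B B' C x y =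
      (1 : MulChar K ℂ) (x * y) * (A * C) (-1) * ∑ u, ffAppellF1Summand A B B' C x y u :=
  rfl

/-- Character values at `-1` are `±1`, so only the parity of each exponent matters. -/
lemma ffAppellF1_sign_factor_eq {K : Type*} [Field K] (A B B' C : MulChar K ℂ) :
    (A * C) (-1) * A (-1) = (B * B') (-1) * (A * (A * B * B' * C⁻¹)) (-1) := by
  simp only [MulChar.mul_apply, MulChar.inv_apply', inv_neg_one]
  linear_combination (1 - B (-1) * B (-1) * B' (-1) * B' (-1)) * C (-1) * A.apply_neg_one_mul_self
    - (B' (-1) * B' (-1)) * C (-1) * B.apply_neg_one_mul_self - C (-1) * B'.apply_neg_one_mul_self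

theorem stmt15 (A B B' C : MulChar F ℂ) (x y : F)
    (hx0 : x ≠ 0) (hx1 : x ≠ 1) (hy0 : y ≠ 0) (hy1 : y ≠ 1) :
    ffAppellF1 A B B' C x y =
      (B * B') (-1) * ffAppellF1 A B B' (A * B * B' * C⁻¹) (1 - x) (1 - y) := by
  have hxy : IsUnit (x * y) := (mul_ne_zero hx0 hy0).isUnit
  have hxy' : IsUnit ((1 - x) * (1 - y)) :=
    (mul_ne_zero (sub_ne_zero.mpr hx1.symm) (sub_ne_zero.mpr hy1.symm)).isUnit
  rw [ffAppellF1_eq_mul_sum, ffAppellF1_eq_mul_sum, MulChar.one_apply hxy,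
    MulChar.one_apply hxy', sum_ffAppellF1Summand_eq, ← mul_assoc, one_mul,
    ffAppellF1_sign_factor_eq A B B' C]
  ring
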